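/- There exists a universal constant c > 0 with the following property. Let p ∈ (1,∞), K ≥ 1, n a positive integer, and X a real Banach space, and suppose there exists a linear map J from the space of real-valued functions on 𝒞_n to X such that ‖h‖_{L_1(𝒞_n;ℝ)} ≤ ‖J h‖_X ≤ K ‖h‖_{L_1(𝒞_n;ℝ)} for every h : 𝒞_n → ℝ. Then there exist functions f_1,…,f_n : 𝒞_n → X such that (2^{−n} Σ_{δ∈𝒞_n} ‖Σ_{i=1}^n δ_i 𝔈_i f_i‖_{L_p(𝒞_n;X)}^p)^{1/p} ≥ c K^{−1} √n (2^{−n} Σ_{δ∈𝒞_n} ‖Σ_{i=1}^n δ_i f_i‖_{L_p(𝒞_n;X)}^p)^{1/p} and the right-hand side is strictly positive. In particular, if X contains the spaces ℓ_1^N uniformly (i.e., such maps J exist for all n with a fixed K), then X does not satisfy the hypercube Stein inequality with any finite constant. -/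

import Mathlib

noncomputable section

open Finset

/-- The sign `±1` attached to a boolean coordinate of the discrete cube. -/
def sgn (b : Bool) : ℝ := if b then 1 else -1

variable {X : Type*} [NormedAddCommGroup X] [NormedSpace ℝ X]

/-- `L_p` norm of `f : 𝒞_n → X` with respect to the uniform probability measure. -/
def cubeLpNorm (n : ℕ) (p : ℝ) (f : (Fin n → Bool) → X) : ℝ :=
  (((2 : ℝ) ^ n)⁻¹ * ∑ ε : Fin n → Bool, ‖f ε‖ ^ p) ^ (1 / p)

/-- Conditional expectation given the coordinates in `S`: average of `f η` over all
`η` agreeing with `ε` on `S`. -/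
def cubeCondExp (n : ℕ) (S : Finset (Fin n)) (f : (Fin n → Bool) → X) :
    (Fin n → Bool) → X := fun ε =>
  ((2 : ℝ) ^ (n - S.card))⁻¹ •
    ∑ η ∈ univ.filter (fun η : Fin n → Bool => ∀ j ∈ S, η j = ε j), f η

/-- The set of the first `i` coordinates (`0`-based). -/
def firstIdx (n i : ℕ) : Finset (Fin n) := univ.filter fun j => (j : ℕ) < i

/-- `𝔈_i`: conditioning on the first `i` coordinates. -/
def Ei (n i : ℕ) (f : (Fin n → Bool) → X) : (Fin n → Bool) → X :=
  cubeCondExp n (firstIdx n i) f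

/-- `𝔈_i^π`: conditioning on the coordinates `π(1),…,π(i)`. -/
def Epi (n : ℕ) (π : Equiv.Perm (Fin n)) (i : ℕ) (f : (Fin n → Bool) → X) :
    (Fin n → Bool) → X :=
  cubeCondExp n ((firstIdx n i).image π) f

/-- `∂_i`: the `i`-th discrete partial derivative. -/
def cubeDeriv (n : ℕ) (i : Fin n) (f : (Fin n → Bool) → X) : (Fin n → Bool) → X :=
  fun ε => (2 : ℝ)⁻¹ • (f ε - f (Function.update ε i (!(ε i))))

/-- `X` satisfies the hypercube Stein inequality with constant `s` for exponent `p`. -/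
def SteinIneq (X : Type*) [NormedAddCommGroup X] [NormedSpace ℝ X] (p s : ℝ) : Prop :=
  ∀ m : ℕ, 0 < m → ∀ (π : Equiv.Perm (Fin m)) (g : Fin m → (Fin m → Bool) → X),
    (((2 : ℝ) ^ m)⁻¹ * ∑ δ : Fin m → Bool,
        (cubeLpNorm m p fun ε => ∑ i : Fin m, sgn (δ i) • Epi m π ((i : ℕ) + 1) (g i) ε) ^ p) ^ (1 / p)
      ≤ s * (((2 : ℝ) ^ m)⁻¹ * ∑ δ : Fin m → Bool,
        (cubeLpNorm m p fun ε => ∑ i : Fin m, sgn (δ i) • g i ε) ^ p) ^ (1 / p)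

/-- `X` satisfies the hypercube UMD⁻ inequality with constant `b` for exponent `p`. -/
def UMDminusIneq (X : Type*) [NormedAddCommGroup X] [NormedSpace ℝ X] (p b : ℝ) : Prop :=
  ∀ m : ℕ, 0 < m → ∀ (π : Equiv.Perm (Fin m)) (d : Fin m → (Fin m → Bool) → X),
    (∀ i : Fin m, Epi m π ((i : ℕ) + 1) (d i) = d i ∧ Epi m π (i : ℕ) (d i) = 0) →
    cubeLpNorm m p (fun ε => ∑ i : Fin m, d i ε)
      ≤ b * (((2 : ℝ) ^ m)⁻¹ * ∑ δ : Fin m → Bool,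
        (cubeLpNorm m p fun ε => ∑ i : Fin m, sgn (δ i) • d i ε) ^ p) ^ (1 / p)

/-- The Walsh function `w_A`. -/
def walsh (n : ℕ) (A : Finset (Fin n)) (ε : Fin n → Bool) : ℝ := ∏ i ∈ A, sgn (ε i)

/-- The Walsh coefficient `f̂(A)`. -/
def walshCoeff (n : ℕ) (f : (Fin n → Bool) → X) (A : Finset (Fin n)) : X :=
  ((2 : ℝ) ^ n)⁻¹ • ∑ ε : Fin n → Bool, walsh n A ε • f ε

/-- `Δ⁻¹∂_i f = Σ_{A ∋ i} |A|⁻¹ f̂(A) w_A`. -/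
def invLapDeriv (n : ℕ) (i : Fin n) (f : (Fin n → Bool) → X) : (Fin n → Bool) → X :=
  fun ε => ∑ A ∈ univ.filter (fun A : Finset (Fin n) => i ∈ A),
    ((A.card : ℝ)⁻¹ * walsh n A ε) • walshCoeff n f A

/-!
For even `i` take `f_i(ε) = J(η ↦ η_i ∏_{j odd} (1 + ε_j η_j))` and `f_i = 0` for odd `i`.
Each factor `1 + ε_j η_j` averages to `1` in `ε_j`, so `𝔈_{i+1}` truncates the Riesz product
to the odd `j < i`. For fixed `δ, ε`, the function `Σ δ_i f_i(ε)` is `J` of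
`(Σ_{i even} δ_i η_i) ∏_{j odd} (1 + ε_j η_j)`, whose `L_1` norm is at most `√n` by
Cauchy–Schwarz and orthogonality of the `η_i`. On the other side, `Σ δ_i 𝔈_{i+1} f_i(ε)` is `J` of
`Σ_{i even} δ_i η_i ∏_{j odd, j < i} (1 + ε_j η_j)`; testing it against `δ_i η_i` on the event
that `i + 1` is the first odd coordinate where `η` and `ε` differ shows that its `L_1` norm is
at least `n / 8`. So the ratio is at least `√n / (8K)`, which is unbounded in `n`.
-/

lemma sgn_mul_self (b : Bool) : sgn b * sgn b = 1 := by cases b <;> norm_num [sgn]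

lemma abs_sgn (b : Bool) : |sgn b| = 1 := by cases b <;> norm_num [sgn]

lemma sgn_not (b : Bool) : sgn (!b) = -sgn b := by cases b <;> norm_num [sgn]

lemma sum_mul_le_sum_abs {ι : Type*} [Fintype ι] (F G : ι → ℝ) (hG : ∀ x, |G x| ≤ 1) :
    ∑ x, F x * G x ≤ ∑ x, |F x| :=
  sum_le_sum fun x _ => calc
    F x * G x ≤ |F x| * |G x| := by rw [← abs_mul]; exact le_abs_self _
    _ ≤ |F x| := mul_le_of_le_one_right (abs_nonneg _) (hG x)

lemma card_filter_even_succ_lt (n : ℕ) :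
    ((range n).filter fun m => Even m ∧ m + 1 < n).card = n / 2 := by
  have h : (range n).filter (fun m => Even m ∧ m + 1 < n) = (range (n / 2)).image (2 * ·) := by
    ext m
    simp only [mem_filter, mem_range, mem_image, Nat.even_iff]
    constructor
    · rintro ⟨-, hm, hlt⟩
      exact ⟨m / 2, by omega, by omega⟩
    · rintro ⟨k, hk, rfl⟩
      omega
  rw [h, card_image_of_injective _ (fun a b h => by simpa using h), card_range]

section Cube

variable {n : ℕ}

lemma sum_cube_prod (c : Fin n → Bool → ℝ) :
    ∑ η : Fin n → Bool, ∏ j, c j (η j) = ∏ j, (c j true + c j false) := by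
  simp [← Fintype.prod_sum]

lemma sum_sgn_mul_eq_zero (i : Fin n) {F : (Fin n → Bool) → ℝ}
    (hF : ∀ η b, F (Function.update η i b) = F η) :
    ∑ η : Fin n → Bool, sgn (η i) * F η = 0 := by
  let flip : Equiv.Perm (Fin n → Bool) :=
    Function.Involutive.toPerm (fun η => Function.update η i (!η i)) fun η => by simp
  have h := Fintype.sum_equiv flip (fun η => sgn (η i) * F η) (fun η => -(sgn (η i) * F η))
    fun η => by simp [show flip η = Function.update η i (!η i) from rfl, sgn_not, hF]
  rw [sum_neg_distrib] at h
  linarith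

lemma sum_ite_even_succ_lt (c : ℝ) :
    ∑ i : Fin n, (if Even (i : ℕ) ∧ (i : ℕ) + 1 < n then c else 0) = (n / 2 : ℕ) * c := by
  rw [Fin.sum_univ_eq_sum_range (fun m => if Even m ∧ m + 1 < n then c else 0), sum_ite,
    sum_const_zero, add_zero, sum_const, card_filter_even_succ_lt, nsmul_eq_mul]

lemma cubeCondExp_map {Y : Type*} [NormedAddCommGroup Y] [NormedSpace ℝ Y] (T : X →ₗ[ℝ] Y)
    (S : Finset (Fin n)) (F : (Fin n → Bool) → X) (ε : Fin n → Bool) :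
    cubeCondExp n S (fun ε => T (F ε)) ε = T (cubeCondExp n S F ε) := by
  simp [cubeCondExp, map_sum]

lemma cubeCondExp_apply (S : Finset (Fin n)) (F : (Fin n → Bool) → (Fin n → Bool) → ℝ)
    (ε η : Fin n → Bool) :
    cubeCondExp n S F ε η = cubeCondExp n S (fun ε => F ε η) ε :=
  (cubeCondExp_map (LinearMap.proj η) S F ε).symm

lemma cubeCondExp_const_mul (c : ℝ) (S : Finset (Fin n)) (F : (Fin n → Bool) → ℝ)
    (ε : Fin n → Bool) : cubeCondExp n S (fun ε => c * F ε) ε = c * cubeCondExp n S F ε :=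
  cubeCondExp_map (LinearMap.mulLeft ℝ c) S F ε

lemma cubeCondExp_prod (S : Finset (Fin n)) (c : Fin n → Bool → ℝ) (ε : Fin n → Bool) :
    cubeCondExp n S (fun η => ∏ j, c j (η j)) ε
      = (∏ j ∈ S, c j (ε j)) * ∏ j ∈ Sᶜ, (c j true + c j false) / 2 := by
  set c' : Fin n → Bool → ℝ := fun j b => if j ∈ S ∧ b ≠ ε j then 0 else c j b
  have hrestrict : ∀ η : Fin n → Bool,
      (if ∀ j ∈ S, η j = ε j then ∏ j, c j (η j) else 0) = ∏ j, c' j (η j) := by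
    intro η
    split_ifs with h
    · exact prod_congr rfl fun j _ => by simp +contextual [c', h j]
    · push Not at h
      obtain ⟨j, hjS, hj⟩ := h
      exact (prod_eq_zero (mem_univ j) (by simp [c', hjS, hj])).symm
  have hcompl : (Sᶜ).card = n - S.card := by rw [card_compl, Fintype.card_fin]
  rw [cubeCondExp, smul_eq_mul, sum_filter, sum_congr rfl fun η _ => hrestrict η,
    sum_cube_prod, ← prod_mul_prod_compl S, prod_div_distrib, prod_const, hcompl]
  have hS : ∀ j ∈ S, c' j true + c' j false = c j (ε j) := by
    intro j hj; cases h : ε j <;> simp [c', hj, h]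
  have hSc : ∀ j ∈ Sᶜ, c' j true + c' j false = c j true + c j false := by
    intro j hj; simp [c', mem_compl.mp hj]
  rw [prod_congr rfl hS, prod_congr rfl hSc]
  field_simp

lemma Epi_one (i : ℕ) (f : (Fin n → Bool) → X) : Epi n 1 i f = Ei n i f := by
  simp [Epi, Ei]

variable {E Y : Type*} [NormedAddCommGroup E] [NormedAddCommGroup Y]

lemma cubeLpNorm_nonneg (p : ℝ) (f : (Fin n → Bool) → E) : 0 ≤ cubeLpNorm n p f :=
  Real.rpow_nonneg (by positivity) _

lemma cubeLpNorm_one (g : (Fin n → Bool) → ℝ) :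
    cubeLpNorm n 1 g = ((2 : ℝ) ^ n)⁻¹ * ∑ η, |g η| := by
  simp [cubeLpNorm]

lemma cubeLpNorm_const {p : ℝ} (hp : p ≠ 0) (x : E) : cubeLpNorm n p (fun _ => x) = ‖x‖ := by
  rw [cubeLpNorm, sum_const, card_univ, Fintype.card_fun, Fintype.card_bool, Fintype.card_fin,
    nsmul_eq_mul, Nat.cast_pow, Nat.cast_ofNat, inv_mul_cancel_left₀ (by positivity),
    ← Real.rpow_mul (norm_nonneg x), mul_one_div_cancel hp, Real.rpow_one]

lemma cubeLpNorm_mono {p : ℝ} (hp : 0 ≤ p) {f : (Fin n → Bool) → E} {g : (Fin n → Bool) → Y}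
    (h : ∀ ε, ‖f ε‖ ≤ ‖g ε‖) : cubeLpNorm n p f ≤ cubeLpNorm n p g := by
  unfold cubeLpNorm
  gcongr with ε
  exact h ε

lemma le_cubeLpNorm_of_le_norm {p a : ℝ} (hp : 0 < p) (ha : 0 ≤ a) {f : (Fin n → Bool) → E}
    (h : ∀ ε, a ≤ ‖f ε‖) : a ≤ cubeLpNorm n p f := by
  calc a = cubeLpNorm n p (fun _ => a) := by rw [cubeLpNorm_const hp.ne', Real.norm_of_nonneg ha]
    _ ≤ cubeLpNorm n p f := cubeLpNorm_mono hp.le fun ε => by simpa [abs_of_nonneg ha] using h ε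

lemma cubeLpNorm_le_of_norm_le {p b : ℝ} (hp : 0 < p) (hb : 0 ≤ b) {f : (Fin n → Bool) → E}
    (h : ∀ ε, ‖f ε‖ ≤ b) : cubeLpNorm n p f ≤ b := by
  calc cubeLpNorm n p f ≤ cubeLpNorm n p (fun _ => b) :=
        cubeLpNorm_mono hp.le fun ε => by simpa [abs_of_nonneg hb] using h ε
    _ = b := by rw [cubeLpNorm_const hp.ne', Real.norm_of_nonneg hb]

lemma cubeLpNorm_cubeLpNorm (p : ℝ) (F : (Fin n → Bool) → (Fin n → Bool) → E) :
    cubeLpNorm n p (fun δ => cubeLpNorm n p (F δ))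
      = (((2 : ℝ) ^ n)⁻¹ * ∑ δ, cubeLpNorm n p (F δ) ^ p) ^ (1 / p) := by
  simp only [cubeLpNorm.eq_1 n p (fun δ => cubeLpNorm n p (F δ)),
    Real.norm_of_nonneg (cubeLpNorm_nonneg p _)]

lemma le_cubeLpNorm_cubeLpNorm_of_le_norm {p a : ℝ} (hp : 0 < p) (ha : 0 ≤ a)
    {F : (Fin n → Bool) → (Fin n → Bool) → E} (h : ∀ δ ε, a ≤ ‖F δ ε‖) :
    a ≤ (((2 : ℝ) ^ n)⁻¹ * ∑ δ, cubeLpNorm n p (F δ) ^ p) ^ (1 / p) := by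
  rw [← cubeLpNorm_cubeLpNorm]
  refine le_cubeLpNorm_of_le_norm hp ha fun δ => ?_
  rw [Real.norm_of_nonneg (cubeLpNorm_nonneg p _)]
  exact le_cubeLpNorm_of_le_norm hp ha (h δ)

lemma cubeLpNorm_cubeLpNorm_le_of_norm_le {p b : ℝ} (hp : 0 < p) (hb : 0 ≤ b)
    {F : (Fin n → Bool) → (Fin n → Bool) → E} (h : ∀ δ ε, ‖F δ ε‖ ≤ b) :
    (((2 : ℝ) ^ n)⁻¹ * ∑ δ, cubeLpNorm n p (F δ) ^ p) ^ (1 / p) ≤ b := by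
  rw [← cubeLpNorm_cubeLpNorm]
  refine cubeLpNorm_le_of_norm_le hp hb fun δ => ?_
  rw [Real.norm_of_nonneg (cubeLpNorm_nonneg p _)]
  exact cubeLpNorm_le_of_norm_le hp hb (h δ)

end Cube

namespace SteinCounterexample

variable {n : ℕ}

def OddCoordFun (F : (Fin n → Bool) → ℝ) : Prop :=
  ∀ i : Fin n, Even (i : ℕ) → ∀ η b, F (Function.update η i b) = F η

def agree (a b : Bool) : ℝ := if a = b then 1 else 0

def oddFactor (c : Bool → Bool → ℝ) (l : ℕ) (j : Fin n) (a b : Bool) : ℝ :=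
  if Odd (j : ℕ) ∧ (j : ℕ) < l then c a b else 1

def oddProd (c : Bool → Bool → ℝ) (l : ℕ) (ε η : Fin n → Bool) : ℝ :=
  ∏ j, oddFactor c l j (ε j) (η j)

/-- The Riesz product `∏_{j odd, j < l} (1 + ε_j η_j)`, in `±1` notation. -/
def riesz (l : ℕ) : (Fin n → Bool) → (Fin n → Bool) → ℝ :=
  oddProd (fun a b => 2 * agree a b) l

def agreeUpTo (l : ℕ) : (Fin n → Bool) → (Fin n → Bool) → ℝ :=
  oddProd agree l

lemma oddCoordFun_oddProd (c : Bool → Bool → ℝ) (l : ℕ) (ε : Fin n → Bool) :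
    OddCoordFun (oddProd c l ε) := by
  intro i hi η b
  refine prod_congr rfl fun j _ => ?_
  unfold oddFactor
  split_ifs with hj
  · have hji : j ≠ i := by
      rintro rfl
      exact Nat.not_even_iff_odd.mpr hj.1 hi
    rw [Function.update_of_ne hji]
  · rfl

lemma sum_oddProd_mul_oddProd (c d : Bool → Bool → ℝ) (l m : ℕ) (ε : Fin n → Bool)
    (v : Fin n → ℝ) (h : ∀ j, oddFactor c l j (ε j) true * oddFactor d m j (ε j) true
      + oddFactor c l j (ε j) false * oddFactor d m j (ε j) false = 2 * v j) :
    ∑ η, oddProd c l ε η * oddProd d m ε η = 2 ^ n * ∏ j, v j := by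
  simp only [oddProd, ← prod_mul_distrib]
  rw [sum_cube_prod (fun j b => oddFactor c l j (ε j) b * oddFactor d m j (ε j) b)]
  simp [h, prod_mul_distrib]

lemma sum_riesz_mul_agreeUpTo_of_le {l m : ℕ} (hml : m ≤ l) (ε : Fin n → Bool) :
    ∑ η, riesz l ε η * agreeUpTo m ε η = 2 ^ n := by
  rw [riesz, agreeUpTo, sum_oddProd_mul_oddProd _ _ _ _ _ (fun _ => 1), prod_const_one, mul_one]
  intro j
  cases ε j <;> simp only [oddFactor, agree, Nat.odd_iff, if_true, if_false,
    Bool.true_eq_false, Bool.false_eq_true] <;> split_ifs <;> first | (exfalso; omega) | norm_num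

lemma sum_riesz_mul_agreeUpTo_succ {l : ℕ} (hl : Odd l) (hln : l < n) (ε : Fin n → Bool) :
    ∑ η, riesz l ε η * agreeUpTo (l + 1) ε η = 2 ^ n / 2 := by
  rw [riesz, agreeUpTo, sum_oddProd_mul_oddProd _ _ _ _ _
    (fun j => if j = ⟨l, hln⟩ then 1 / 2 else 1), Fintype.prod_ite_eq', mul_one_div]
  intro j
  rw [Nat.odd_iff] at hl
  cases ε j <;> simp only [oddFactor, agree, Nat.odd_iff, Fin.ext_iff, if_true, if_false,
    Bool.true_eq_false, Bool.false_eq_true] <;> split_ifs <;>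
    first | (exfalso; omega) | norm_num

lemma sum_riesz (l : ℕ) (ε : Fin n → Bool) : ∑ η, riesz l ε η = 2 ^ n := by
  simpa [agreeUpTo, oddProd, oddFactor] using sum_riesz_mul_agreeUpTo_of_le (Nat.zero_le l) ε

lemma riesz_nonneg (l : ℕ) (ε η : Fin n → Bool) : 0 ≤ riesz l ε η := by
  rw [riesz, oddProd]
  exact prod_nonneg fun j _ => by simp only [oddFactor, agree]; split_ifs <;> norm_num

lemma oddFactor_agree_nonneg (l : ℕ) (j : Fin n) (a b : Bool) : 0 ≤ oddFactor agree l j a b := by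
  unfold oddFactor agree; split_ifs <;> norm_num

lemma oddFactor_agree_antitone {l m : ℕ} (hlm : l ≤ m) (j : Fin n) (a b : Bool) :
    oddFactor agree m j a b ≤ oddFactor agree l j a b := by
  simp only [oddFactor, agree, Nat.odd_iff]; split_ifs <;> first | (exfalso; omega) | norm_num

lemma agreeUpTo_nonneg (l : ℕ) (ε η : Fin n → Bool) : 0 ≤ agreeUpTo l ε η := by
  rw [agreeUpTo, oddProd]
  exact prod_nonneg fun j _ => oddFactor_agree_nonneg l j _ _

lemma agreeUpTo_antitone {l m : ℕ} (hlm : l ≤ m) (ε η : Fin n → Bool) :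
    agreeUpTo m ε η ≤ agreeUpTo l ε η := by
  rw [agreeUpTo, agreeUpTo, oddProd, oddProd]
  exact prod_le_prod (fun j _ => oddFactor_agree_nonneg m j _ _)
    fun j _ => oddFactor_agree_antitone hlm j _ _

lemma agreeUpTo_le_one (l : ℕ) (ε η : Fin n → Bool) : agreeUpTo l ε η ≤ 1 :=
  (agreeUpTo_antitone (Nat.zero_le l) ε η).trans_eq (by simp [agreeUpTo, oddProd, oddFactor])

lemma sum_agreeUpTo_sub_le_one (ε η : Fin n → Bool) :
    ∑ i : Fin n, (agreeUpTo ((i : ℕ) + 1) ε η - agreeUpTo ((i : ℕ) + 2) ε η) ≤ 1 := by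
  rw [Fin.sum_univ_eq_sum_range (fun m => agreeUpTo (m + 1) ε η - agreeUpTo (m + 2) ε η),
    sum_range_sub' (fun m => agreeUpTo (m + 1) ε η)]
  linarith [agreeUpTo_le_one 1 ε η, agreeUpTo_nonneg (n + 1) ε η]

lemma cubeCondExp_riesz {l m : ℕ} (hlm : l ≤ m) (ε η : Fin n → Bool) :
    cubeCondExp n (firstIdx n l) (fun ε => riesz m ε η) ε = riesz l ε η := by
  simp only [riesz, oddProd]
  rw [cubeCondExp_prod _ (fun j a => oddFactor (fun a b => 2 * agree a b) m j a (η j)),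
    prod_eq_one (s := (firstIdx n l)ᶜ), mul_one, firstIdx, prod_filter]
  · refine prod_congr rfl fun j _ => ?_
    simp only [oddFactor, Nat.odd_iff]
    split_ifs <;> first | rfl | (exfalso; omega)
  · intro j _
    cases η j <;> simp only [oddFactor, agree] <;> split_ifs <;> first | contradiction | norm_num

def signedTerm (W : (Fin n → Bool) → ℝ) (i : Fin n) (η : Fin n → Bool) : ℝ :=
  if Even (i : ℕ) then sgn (η i) * W η else 0

def signedSum (δ : Fin n → Bool) (W : Fin n → (Fin n → Bool) → ℝ) (η : Fin n → Bool) : ℝ :=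
  ∑ i, sgn (δ i) * signedTerm (W i) i η

lemma sum_signedTerm_mul_signedTerm {W W' : (Fin n → Bool) → ℝ} (hW : OddCoordFun W)
    (hW' : OddCoordFun W') (i i' : Fin n) :
    ∑ η, signedTerm W i η * signedTerm W' i' η
      = if i = i' ∧ Even (i : ℕ) then ∑ η, W η * W' η else 0 := by
  unfold signedTerm
  by_cases hi : Even (i : ℕ)
  · by_cases hi' : Even (i' : ℕ)
    · by_cases hii : i = i'
      · subst hii
        simp only [hi, and_self, if_true]
        refine sum_congr rfl fun η _ => ?_
        linear_combination W η * W' η * sgn_mul_self (η i)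
      · simp only [hi, hi', hii, false_and, if_true, if_false]
        rw [← sum_sgn_mul_eq_zero i (F := fun η => W η * (sgn (η i') * W' η))
          fun η b => by rw [hW i hi, hW' i hi, Function.update_of_ne (Ne.symm hii)]]
        exact sum_congr rfl fun η _ => by ring
    · simp [hi', show ¬(i = i' ∧ Even (i : ℕ)) from fun h => hi' (h.1 ▸ h.2)]
  · simp [hi]

lemma sum_signedSum_mul_signedSum {W W' : Fin n → (Fin n → Bool) → ℝ}
    (hW : ∀ i, OddCoordFun (W i)) (hW' : ∀ i, OddCoordFun (W' i)) (δ : Fin n → Bool) :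
    ∑ η, signedSum δ W η * signedSum δ W' η
      = ∑ i : Fin n, if Even (i : ℕ) then ∑ η, W i η * W' i η else 0 := by
  simp only [signedSum, sum_mul_sum, mul_mul_mul_comm _ (signedTerm _ _ _)]
  rw [sum_comm]
  refine sum_congr rfl fun i _ => ?_
  rw [sum_comm, sum_eq_single i]
  · rw [← mul_sum, sum_signedTerm_mul_signedTerm (hW i) (hW' i), sgn_mul_self, one_mul]
    simp
  · intro i' _ hi'
    rw [← mul_sum, sum_signedTerm_mul_signedTerm (hW i) (hW' i'), if_neg (by tauto), mul_zero]
  · simp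

lemma abs_signedSum_le (δ : Fin n → Bool) (W : Fin n → (Fin n → Bool) → ℝ) (η : Fin n → Bool) :
    |signedSum δ W η| ≤ ∑ i, |W i η| :=
  (abs_sum_le_sum_abs _ _).trans <| sum_le_sum fun i _ => by
    rw [abs_mul, abs_sgn, one_mul, signedTerm]
    split_ifs <;> simp [abs_mul, abs_sgn]

lemma signedSum_const (δ : Fin n → Bool) (P : (Fin n → Bool) → ℝ) (η : Fin n → Bool) :
    signedSum δ (fun _ => P) η = signedSum δ (fun _ _ => 1) η * P η := by
  simp only [signedSum, signedTerm, sum_mul]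
  refine sum_congr rfl fun i _ => ?_
  split_ifs <;> ring

lemma map_signedSum (J : ((Fin n → Bool) → ℝ) →ₗ[ℝ] X) (δ : Fin n → Bool)
    (W : Fin n → (Fin n → Bool) → ℝ) :
    ∑ i, sgn (δ i) • J (signedTerm (W i) i) = J (signedSum δ W) := by
  simp only [← map_smul, ← map_sum]
  congr 1
  funext η
  simp [signedSum]

lemma Ei_signedTerm_riesz (J : ((Fin n → Bool) → ℝ) →ₗ[ℝ] X) (i : Fin n) :
    Ei n ((i : ℕ) + 1) (fun ε => J (signedTerm (riesz n ε) i))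
      = fun ε => J (signedTerm (riesz ((i : ℕ) + 1) ε) i) := by
  funext ε
  rw [Ei, cubeCondExp_map]
  congr 1
  funext η
  rw [cubeCondExp_apply]
  unfold signedTerm
  split_ifs
  · rw [cubeCondExp_const_mul, cubeCondExp_riesz i.isLt]
  · simp [cubeCondExp]

lemma sum_abs_signedSum_const_le (δ : Fin n → Bool) {P : (Fin n → Bool) → ℝ}
    (hP : OddCoordFun P) (hP₀ : ∀ η, 0 ≤ P η) :
    ∑ η, |signedSum δ (fun _ => P) η| ≤ √n * ∑ η, P η := by
  set S := signedSum δ (fun _ _ => 1) with hS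
  have hsq : ∑ η, S η ^ 2 * P η ≤ n * ∑ η, P η := by
    have h := sum_signedSum_mul_signedSum (fun _ => hP) (W' := fun _ _ => 1)
      (fun _ _ _ _ _ => rfl) δ
    simp only [signedSum_const δ P, mul_one] at h
    calc ∑ η, S η ^ 2 * P η = ∑ η, S η * P η * S η := sum_congr rfl fun η _ => by ring
      _ = ∑ i : Fin n, if Even (i : ℕ) then ∑ η, P η else 0 := h
      _ ≤ ∑ _i : Fin n, ∑ η, P η :=
          sum_le_sum fun i _ => by split_ifs <;> simp [sum_nonneg fun η _ => hP₀ η]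
      _ = n * ∑ η, P η := by simp
  calc ∑ η, |signedSum δ (fun _ => P) η| = ∑ η, √(P η) * √(S η ^ 2 * P η) :=
        sum_congr rfl fun η _ => by
          rw [signedSum_const, ← hS, Real.sqrt_mul (sq_nonneg _), Real.sqrt_sq_eq_abs, abs_mul,
            abs_of_nonneg (hP₀ η)]
          linear_combination -|S η| * Real.mul_self_sqrt (hP₀ η)
    _ ≤ √(∑ η, P η) * √(∑ η, S η ^ 2 * P η) :=
        Real.sum_sqrt_mul_sqrt_le _ hP₀ fun η => mul_nonneg (sq_nonneg _) (hP₀ η)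
    _ ≤ √(∑ η, P η) * √(n * ∑ η, P η) := by gcongr
    _ = √n * ∑ η, P η := by
        rw [Real.sqrt_mul (Nat.cast_nonneg n), mul_left_comm,
          Real.mul_self_sqrt (sum_nonneg fun η _ => hP₀ η)]

lemma sum_le_sum_abs_signedSum (hn : 0 < n) {W : Fin n → (Fin n → Bool) → ℝ}
    (hW : ∀ i, OddCoordFun (W i)) (δ : Fin n → Bool) :
    ∑ η, W ⟨0, hn⟩ η ≤ ∑ η, |signedSum δ W η| := by
  let W' : Fin n → (Fin n → Bool) → ℝ := fun i _ => if i = ⟨0, hn⟩ then 1 else 0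
  have htest : ∀ η, |signedSum δ W' η| ≤ 1 := fun η =>
    (abs_signedSum_le δ W' η).trans_eq (by simp [W', apply_ite])
  calc ∑ η, W ⟨0, hn⟩ η
      = ∑ i : Fin n, if Even (i : ℕ) then ∑ η, W i η * W' i η else 0 := by
        symm
        rw [sum_eq_single ⟨0, hn⟩ (fun i _ hi => by simp [W', hi]) (by simp)]
        simp [W']
    _ = ∑ η, signedSum δ W η * signedSum δ W' η :=
        (sum_signedSum_mul_signedSum hW (fun _ _ _ _ _ => rfl) δ).symm
    _ ≤ ∑ η, |signedSum δ W η| := sum_mul_le_sum_abs _ _ htest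

/-- The test function is `δ_i η_i` on the event that `i + 1` is the first odd coordinate where
`η` and `ε` differ; each even `i` with `i + 1 < n` contributes `1 - 1/2`. -/
lemma sum_abs_signedSum_riesz_succ_ge (ε δ : Fin n → Bool) :
    (n / 2 : ℕ) * (2 ^ n / 2 : ℝ) ≤ ∑ η, |signedSum δ (fun i => riesz ((i : ℕ) + 1) ε) η| := by
  let W' : Fin n → (Fin n → Bool) → ℝ := fun i η =>
    if (i : ℕ) + 1 < n then agreeUpTo ((i : ℕ) + 1) ε η - agreeUpTo ((i : ℕ) + 2) ε η else 0
  have hW' : ∀ i, OddCoordFun (W' i) := fun i j hj η b => by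
    simp only [W', agreeUpTo, oddCoordFun_oddProd _ _ ε j hj]
  have hterm : ∀ i η, |W' i η| ≤ agreeUpTo ((i : ℕ) + 1) ε η - agreeUpTo ((i : ℕ) + 2) ε η := by
    intro i η
    have hanti := agreeUpTo_antitone (Nat.le_succ ((i : ℕ) + 1)) ε η
    simp only [W']
    split_ifs
    · exact (abs_of_nonneg (sub_nonneg.mpr hanti)).le
    · simpa using hanti
  have htest : ∀ η, |signedSum δ W' η| ≤ 1 := fun η =>
    (abs_signedSum_le δ W' η).trans <|
      (sum_le_sum fun i _ => hterm i η).trans (sum_agreeUpTo_sub_le_one ε η)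
  calc (n / 2 : ℕ) * (2 ^ n / 2 : ℝ)
      = ∑ i : Fin n, if Even (i : ℕ) then ∑ η, riesz ((i : ℕ) + 1) ε η * W' i η else 0 := by
        rw [← sum_ite_even_succ_lt]
        refine sum_congr rfl fun i _ => ?_
        by_cases hi : Even (i : ℕ) <;> by_cases hin : (i : ℕ) + 1 < n
        · simp only [hi, hin, and_self, if_true, W', mul_sub, sum_sub_distrib,
            sum_riesz_mul_agreeUpTo_of_le le_rfl,
            sum_riesz_mul_agreeUpTo_succ (Even.add_one hi) hin]
          ring
        all_goals simp [hi, hin, W']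
    _ = ∑ η, signedSum δ (fun i => riesz ((i : ℕ) + 1) ε) η * signedSum δ W' η :=
        (sum_signedSum_mul_signedSum (fun i => oddCoordFun_oddProd _ _ ε) hW' δ).symm
    _ ≤ _ := sum_mul_le_sum_abs _ _ htest

lemma cubeLpNorm_one_signedSum_riesz_le (δ ε : Fin n → Bool) :
    cubeLpNorm n 1 (signedSum δ (fun _ => riesz n ε)) ≤ √n := by
  rw [cubeLpNorm_one, inv_mul_le_iff₀ (by positivity), mul_comm, ← sum_riesz n ε]
  exact sum_abs_signedSum_const_le δ (oddCoordFun_oddProd _ _ ε) (riesz_nonneg n ε)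

lemma one_le_cubeLpNorm_one_signedSum_riesz (hn : 0 < n) (l : Fin n → ℕ) (δ ε : Fin n → Bool) :
    1 ≤ cubeLpNorm n 1 (signedSum δ (fun i => riesz (l i) ε)) := by
  rw [cubeLpNorm_one, le_inv_mul_iff₀ (by positivity), mul_one, ← sum_riesz (l ⟨0, hn⟩) ε]
  exact sum_le_sum_abs_signedSum hn (fun i => oddCoordFun_oddProd _ _ ε) δ

lemma cubeLpNorm_one_signedSum_riesz_succ_ge (hn : 0 < n) (δ ε : Fin n → Bool) :
    n / 8 ≤ cubeLpNorm n 1 (signedSum δ (fun i => riesz ((i : ℕ) + 1) ε)) := by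
  have hone := one_le_cubeLpNorm_one_signedSum_riesz hn (fun i => (i : ℕ) + 1) δ ε
  have hhalf : (n / 2 : ℕ) / 2 ≤ cubeLpNorm n 1 (signedSum δ (fun i => riesz ((i : ℕ) + 1) ε)) := by
    rw [cubeLpNorm_one, le_inv_mul_iff₀ (by positivity)]
    exact (le_of_eq (by ring)).trans (sum_abs_signedSum_riesz_succ_ge ε δ)
  have hfloor : (n : ℝ) ≤ 2 * (n / 2 : ℕ) + 1 := by exact_mod_cast (by omega : n ≤ 2 * (n / 2) + 1)
  linarith

lemma exists_stein_violation {p K : ℝ} (hp : 0 < p) (hK : 0 < K) (hn : 0 < n)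
    (J : ((Fin n → Bool) → ℝ) →ₗ[ℝ] X)
    (hJ : ∀ h : (Fin n → Bool) → ℝ, cubeLpNorm n 1 h ≤ ‖J h‖ ∧ ‖J h‖ ≤ K * cubeLpNorm n 1 h) :
    ∃ f : Fin n → (Fin n → Bool) → X,
      (((2 : ℝ) ^ n)⁻¹ * ∑ δ : Fin n → Bool,
          (cubeLpNorm n p fun ε =>
            ∑ i : Fin n, sgn (δ i) • Ei n ((i : ℕ) + 1) (f i) ε) ^ p) ^ (1 / p)
        ≥ 1 / 8 * K⁻¹ * √n * (((2 : ℝ) ^ n)⁻¹ * ∑ δ : Fin n → Bool,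
          (cubeLpNorm n p fun ε => ∑ i : Fin n, sgn (δ i) • f i ε) ^ p) ^ (1 / p) ∧
      0 < (((2 : ℝ) ^ n)⁻¹ * ∑ δ : Fin n → Bool,
          (cubeLpNorm n p fun ε => ∑ i : Fin n, sgn (δ i) • f i ε) ^ p) ^ (1 / p) := by
  refine ⟨fun i ε => J (signedTerm (riesz n ε) i), ?_⟩
  simp only [Ei_signedTerm_riesz, map_signedSum]
  have hleft := le_cubeLpNorm_cubeLpNorm_of_le_norm hp (by positivity) fun δ ε =>
    (cubeLpNorm_one_signedSum_riesz_succ_ge hn δ ε).trans (hJ _).1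
  have hright_le := cubeLpNorm_cubeLpNorm_le_of_norm_le hp (by positivity) fun δ ε =>
    (hJ _).2.trans (mul_le_mul_of_nonneg_left (cubeLpNorm_one_signedSum_riesz_le δ ε) hK.le)
  have hright_ge := le_cubeLpNorm_cubeLpNorm_of_le_norm hp zero_le_one fun δ ε =>
    (one_le_cubeLpNorm_one_signedSum_riesz hn (fun _ => n) δ ε).trans (hJ _).1
  refine ⟨?_, zero_lt_one.trans_le hright_ge⟩
  calc 1 / 8 * K⁻¹ * √n * _ ≤ 1 / 8 * K⁻¹ * √n * (K * √n) := by gcongr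
    _ = n / 8 := by field_simp; rw [Real.sq_sqrt n.cast_nonneg]
    _ ≤ _ := hleft

lemma not_steinIneq {p K s : ℝ} (hp : 0 < p) (hK : 0 < K) (hs : 0 < s)
    (hJ : ∀ n : ℕ, 0 < n → ∃ J : ((Fin n → Bool) → ℝ) →ₗ[ℝ] X, ∀ h : (Fin n → Bool) → ℝ,
      cubeLpNorm n 1 h ≤ ‖J h‖ ∧ ‖J h‖ ≤ K * cubeLpNorm n 1 h) :
    ¬SteinIneq X p s := by
  intro hstein
  obtain ⟨n, hn⟩ := exists_nat_gt ((8 * s * K) ^ 2)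
  have hn₀ : 0 < n := by exact_mod_cast (sq_nonneg (8 * s * K)).trans_lt hn
  obtain ⟨J, hJn⟩ := hJ n hn₀
  obtain ⟨f, hlower, hpos⟩ := exists_stein_violation hp hK hn₀ J hJn
  have hupper := hstein n hn₀ 1 f
  simp only [Epi_one] at hupper
  have hsn : s < 1 / 8 * K⁻¹ * √n := by
    have h8 : 8 * s * K < √n := (Real.lt_sqrt (by positivity)).mpr hn
    rw [show 1 / 8 * K⁻¹ * √n = √n / (8 * K) by field_simp, lt_div_iff₀ (by positivity)]
    linarith
  linarith [mul_lt_mul_of_pos_right hsn hpos]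

end SteinCounterexample

/-- If a Banach space `X` contains an isomorphic copy of `L₁(𝒞_n;ℝ)` with distortion `K`,
then the Stein inequality on `𝒞_n` fails for `X` by a factor `c K⁻¹ √n`; in particular a
space containing the `ℓ₁ᴺ`'s uniformly satisfies no hypercube Stein inequality. -/
theorem stein_fails_if_contains_L1 :
    ∃ c : ℝ, 0 < c ∧
      ((∀ (p : ℝ), 1 < p → ∀ (K : ℝ), 1 ≤ K → ∀ (n : ℕ), 0 < n →
        ∀ (X : Type) (_ : NormedAddCommGroup X) (_ : NormedSpace ℝ X) (_ : CompleteSpace X),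
        ∀ J : ((Fin n → Bool) → ℝ) →ₗ[ℝ] X,
          (∀ h : (Fin n → Bool) → ℝ, cubeLpNorm n 1 h ≤ ‖J h‖ ∧ ‖J h‖ ≤ K * cubeLpNorm n 1 h) →
          ∃ f : Fin n → (Fin n → Bool) → X,
            (((2 : ℝ) ^ n)⁻¹ * ∑ δ : Fin n → Bool,
                (cubeLpNorm n p fun ε =>
                  ∑ i : Fin n, sgn (δ i) • Ei n ((i : ℕ) + 1) (f i) ε) ^ p) ^ (1 / p)
              ≥ c * K⁻¹ * Real.sqrt n * (((2 : ℝ) ^ n)⁻¹ * ∑ δ : Fin n → Bool,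
                (cubeLpNorm n p fun ε => ∑ i : Fin n, sgn (δ i) • f i ε) ^ p) ^ (1 / p) ∧
            0 < (((2 : ℝ) ^ n)⁻¹ * ∑ δ : Fin n → Bool,
                (cubeLpNorm n p fun ε => ∑ i : Fin n, sgn (δ i) • f i ε) ^ p) ^ (1 / p)) ∧
      (∀ (p : ℝ), 1 < p →
        ∀ (X : Type) (_ : NormedAddCommGroup X) (_ : NormedSpace ℝ X) (_ : CompleteSpace X),
          (∃ K : ℝ, 1 ≤ K ∧ ∀ n : ℕ, 0 < n →
            ∃ J : ((Fin n → Bool) → ℝ) →ₗ[ℝ] X,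
              ∀ h : (Fin n → Bool) → ℝ,
                cubeLpNorm n 1 h ≤ ‖J h‖ ∧ ‖J h‖ ≤ K * cubeLpNorm n 1 h) →
          ∀ s : ℝ, 0 < s → ¬ SteinIneq X p s)) := by
  refine ⟨1 / 8, by norm_num, ?_, ?_⟩
  · intro p hp K hK n hn X _ _ _ J hJ
    exact SteinCounterexample.exists_stein_violation (by linarith) (by linarith) hn J hJ
  · rintro p hp X _ _ _ ⟨K, hK, hJ⟩ s hs
    exact SteinCounterexample.not_steinIneq (by linarith) (by linarith) hs hJ
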